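/- arXiv:2312.13204 — 2 statements merged into one kernel-verified Lean document; each statement's English description precedes it below -/
import Mathlib

section
/- Let Ω ⊂ ℂ be a bounded, open, simply connected domain, φ : 𝔻 → Ω a conformal mapping, ρ a density on Ω, and q > 2. Then for every measurable function f : 𝔻 → ℝ, (∫_Ω |f(φ⁻¹(x))|² ρ(x) dx)^{1/2} ≤ (∫_𝔻 |f(y)|^q dy)^{1/q} · (∫_Ω (ρ(x)·|φ'(φ⁻¹(x))|^{4/q})^{q/(q−2)} dx)^{(q−2)/(2q)}, whenever the right-hand side is finite. (This estimates the norm of the composition operator (φ⁻¹)* : L^q(𝔻) → L²(Ω,ρ) by ‖ρ / J_{φ⁻¹}^{2/q}‖_{L^{q/(q−2)}(Ω)}^{1/2}.) -/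
/-!
Substituting `x = φ y` turns both integrals over `Ω` into integrals over the disc, with Jacobian
`|φ'(y)|²`: the left-hand side becomes `∫_𝔻 |f|² w` and the last factor `∫_𝔻 w^{q/(q-2)}`, for the
weight `w = (ρ ∘ φ) |φ'|²`. The estimate is then Hölder's inequality on `𝔻` for `|f|² ∈ L^{q/2}`
and `w ∈ L^{q/(q-2)}`.
-/

open MeasureTheory Metric Set

theorem Complex.det_restrictScalars_toSpanSingleton (c : ℂ) :
    ((ContinuousLinearMap.toSpanSingleton ℂ c).restrictScalars ℝ).det = ‖c‖ ^ 2 := by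
  simp [ContinuousLinearMap.det, LinearMap.det_restrictScalars, Algebra.norm_complex_apply,
    Complex.normSq_eq_norm_sq]

section ChangeOfVariables

variable {F : Type*} [NormedAddCommGroup F] [NormedSpace ℝ F] {s : Set ℂ} {f f' : ℂ → ℂ}

theorem integral_image_eq_integral_norm_deriv_sq_smul (hs : MeasurableSet s)
    (hf : ∀ x ∈ s, HasDerivWithinAt f (f' x) s x) (hinj : InjOn f s) (g : ℂ → F) :
    ∫ x in f '' s, g x = ∫ x in s, ‖f' x‖ ^ 2 • g (f x) := by
  rw [integral_image_eq_integral_abs_det_fderiv_smul volume hs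
    (fun x hx => (hf x hx).hasFDerivWithinAt.restrictScalars ℝ) hinj g]
  refine setIntegral_congr_fun hs fun x _ => ?_
  rw [Complex.det_restrictScalars_toSpanSingleton, abs_sq]

theorem integrableOn_image_iff_integrableOn_norm_deriv_sq_smul (hs : MeasurableSet s)
    (hf : ∀ x ∈ s, HasDerivWithinAt f (f' x) s x) (hinj : InjOn f s) (g : ℂ → F) :
    IntegrableOn g (f '' s) ↔ IntegrableOn (fun x => ‖f' x‖ ^ 2 • g (f x)) s := by
  rw [integrableOn_image_iff_integrableOn_abs_det_fderiv_smul volume hs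
    (fun x hx => (hf x hx).hasFDerivWithinAt.restrictScalars ℝ) hinj g]
  refine integrableOn_congr_fun (fun x _ => ?_) hs
  rw [Complex.det_restrictScalars_toSpanSingleton, abs_sq]

end ChangeOfVariables

theorem sq_abs_rpow_div_two (x q : ℝ) : (|x| ^ 2) ^ (q / 2) = |x| ^ q := by
  rw [← Real.rpow_natCast, ← Real.rpow_mul (abs_nonneg x)]
  congr 1
  push_cast
  ring

theorem sq_mul_mul_rpow_four_div_rpow {q : ℝ} (hq : 2 < q) {v d : ℝ} (hv : 0 ≤ v) (hd : 0 < d) :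
    d ^ 2 * (v * d ^ (4 / q)) ^ (q / (q - 2)) = (v * d ^ 2) ^ (q / (q - 2)) := by
  have hq2 : q - 2 ≠ 0 := by linarith
  rw [Real.mul_rpow hv (by positivity), Real.mul_rpow hv (by positivity), ← Real.rpow_natCast d 2,
    ← Real.rpow_mul hd.le, ← Real.rpow_mul hd.le, mul_left_comm, ← Real.rpow_add hd]
  congr 2
  field_simp
  push_cast
  ring

section Holder

variable {α : Type*} [MeasurableSpace α] {μ : Measure α}

theorem memLp_ofReal_of_integrable_norm_rpow {g : α → ℝ} {p : ℝ} (hp : 0 < p)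
    (hg : AEStronglyMeasurable g μ) (h : Integrable (fun x => ‖g x‖ ^ p) μ) :
    MemLp g (ENNReal.ofReal p) μ :=
  (integrable_norm_rpow_iff hg (by simpa using hp) ENNReal.ofReal_ne_top).1
    (by rwa [ENNReal.toReal_ofReal hp.le])

theorem integral_sq_mul_rpow_half_le_Lp_mul_Lq {q : ℝ} (hq : 2 < q) {f w : α → ℝ}
    (hf : AEStronglyMeasurable f μ) (hfq : Integrable (fun x => |f x| ^ q) μ)
    (hw : AEStronglyMeasurable w μ) (hw0 : 0 ≤ᵐ[μ] w)
    (hwr : Integrable (fun x => w x ^ (q / (q - 2))) μ) :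
    (∫ x, |f x| ^ 2 * w x ∂μ) ^ ((1 : ℝ) / 2) ≤
      (∫ x, |f x| ^ q ∂μ) ^ (1 / q) * (∫ x, w x ^ (q / (q - 2)) ∂μ) ^ ((q - 2) / (2 * q)) := by
  have hq2 : 0 < q - 2 := by linarith
  have hconj : (q / 2).HolderConjugate (q / (q - 2)) := by
    rw [Real.holderConjugate_iff]
    exact ⟨by linarith, by field_simp; ring⟩
  have hF : MemLp (fun x => |f x| ^ 2) (ENNReal.ofReal (q / 2)) μ := by
    refine memLp_ofReal_of_integrable_norm_rpow (by positivity) (hf.norm.pow 2) ?_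
    simpa only [Real.norm_eq_abs, abs_pow, abs_abs, sq_abs_rpow_div_two] using hfq
  have hW : MemLp w (ENNReal.ofReal (q / (q - 2))) μ := by
    refine memLp_ofReal_of_integrable_norm_rpow (by positivity) hw (hwr.congr ?_)
    filter_upwards [hw0] with x hx
    rw [Real.norm_of_nonneg hx]
  have holder := integral_mul_le_Lp_mul_Lq_of_nonneg hconj
    (Filter.Eventually.of_forall fun x => by positivity) hw0 hF hW
  simp only [sq_abs_rpow_div_two] at holder
  have hA : 0 ≤ ∫ x, |f x| ^ q ∂μ := integral_nonneg fun x => by positivity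
  have hB : 0 ≤ ∫ x, w x ^ (q / (q - 2)) ∂μ :=
    integral_nonneg_of_ae (by filter_upwards [hw0] with x hx using Real.rpow_nonneg hx _)
  calc (∫ x, |f x| ^ 2 * w x ∂μ) ^ ((1 : ℝ) / 2)
      ≤ ((∫ x, |f x| ^ q ∂μ) ^ (1 / (q / 2)) *
          (∫ x, w x ^ (q / (q - 2)) ∂μ) ^ (1 / (q / (q - 2)))) ^ ((1 : ℝ) / 2) :=
        Real.rpow_le_rpow (integral_nonneg_of_ae <| by
          filter_upwards [hw0] with x hx using mul_nonneg (by positivity) hx) holder (by norm_num)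
    _ = _ := by
        rw [Real.mul_rpow (by positivity) (by positivity), ← Real.rpow_mul hA,
          ← Real.rpow_mul hB]
        congr 2 <;> field_simp

end Holder

theorem composition_operator_Lq_to_weighted_L2_general
    (Ω : Set ℂ)
    (φ φinv : ℂ → ℂ)
    (hφdiff : DifferentiableOn ℂ φ (ball (0:ℂ) 1))
    (hφderiv : ∀ y ∈ ball (0:ℂ) 1, deriv φ y ≠ 0)
    (hφbij : Set.BijOn φ (ball (0:ℂ) 1) Ω)
    (hφinv : Set.InvOn φinv φ (ball (0:ℂ) 1) Ω)
    (ρ : ℂ → ℝ) (hρcont : ContinuousOn ρ Ω) (hρpos : ∀ x ∈ Ω, 0 < ρ x)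
    (q : ℝ) (hq : 2 < q)
    (f : ℂ → ℝ) (hfm : Measurable f)
    (hfq : IntegrableOn (fun y => |f y| ^ q) (ball (0:ℂ) 1))
    (hKint : IntegrableOn
      (fun x => (ρ x * ‖deriv φ (φinv x)‖ ^ (4/q)) ^ (q/(q-2))) Ω) :
    (∫ x in Ω, |f (φinv x)| ^ 2 * ρ x) ^ ((1:ℝ)/2) ≤
      (∫ y in ball (0:ℂ) 1, |f y| ^ q) ^ (1/q) *
        (∫ x in Ω, (ρ x * ‖deriv φ (φinv x)‖ ^ (4/q)) ^ (q/(q-2))) ^ ((q-2)/(2*q)) := by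
  set w : ℂ → ℝ := fun y => ρ (φ y) * ‖deriv φ y‖ ^ 2
  have hφ' : ∀ y ∈ ball (0:ℂ) 1, HasDerivWithinAt φ (deriv φ y) (ball 0 1) y := fun y hy =>
    (hφdiff.differentiableAt (isOpen_ball.mem_nhds hy)).hasDerivAt.hasDerivWithinAt
  have hL : EqOn (fun y => ‖deriv φ y‖ ^ 2 • (|f (φinv (φ y))| ^ 2 * ρ (φ y)))
      (fun y => |f y| ^ 2 * w y) (ball 0 1) := fun y hy => by
    simp only [hφinv.1 hy, smul_eq_mul, w]
    ring
  have hK : EqOn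
      (fun y => ‖deriv φ y‖ ^ 2 • (ρ (φ y) * ‖deriv φ (φinv (φ y))‖ ^ (4/q)) ^ (q/(q-2)))
      (fun y => w y ^ (q/(q-2))) (ball 0 1) := fun y hy => by
    simpa only [hφinv.1 hy, smul_eq_mul] using sq_mul_mul_rpow_four_div_rpow hq
      (hρpos _ (hφbij.mapsTo hy)).le (norm_pos_iff.2 (hφderiv y hy))
  have hw : ContinuousOn w (ball 0 1) :=
    (hρcont.comp hφdiff.continuousOn hφbij.mapsTo).mul
      ((hφdiff.analyticOnNhd isOpen_ball).deriv.continuousOn.norm.pow 2)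
  have hw0 : 0 ≤ᵐ[volume.restrict (ball (0:ℂ) 1)] w :=
    ae_restrict_of_forall_mem measurableSet_ball fun y hy =>
      mul_nonneg (hρpos _ (hφbij.mapsTo hy)).le (sq_nonneg _)
  rw [← hφbij.image_eq] at hKint ⊢
  rw [integral_image_eq_integral_norm_deriv_sq_smul measurableSet_ball hφ' hφbij.injOn,
    integral_image_eq_integral_norm_deriv_sq_smul measurableSet_ball hφ' hφbij.injOn,
    setIntegral_congr_fun measurableSet_ball hL, setIntegral_congr_fun measurableSet_ball hK]
  rw [integrableOn_image_iff_integrableOn_norm_deriv_sq_smul measurableSet_ball hφ'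
    hφbij.injOn, integrableOn_congr_fun hK measurableSet_ball] at hKint
  exact integral_sq_mul_rpow_half_le_Lp_mul_Lq hq hfm.aestronglyMeasurable hfq
    (hw.aestronglyMeasurable measurableSet_ball) hw0 hKint

/-- Norm estimate of the composition operator
`(φ⁻¹)* : L^q(𝔻) → L²(Ω,ρ)` by `‖ρ / J_{φ⁻¹}^{2/q}‖_{L^{q/(q−2)}(Ω)}^{1/2}`,
where `ρ/J_{φ⁻¹}^{2/q} = ρ(x)·|φ'(φ⁻¹(x))|^{4/q}`. -/
theorem composition_operator_Lq_to_weighted_L2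
    (Ω : Set ℂ) (hΩopen : IsOpen Ω) (hΩbdd : Bornology.IsBounded Ω)
    (hΩsc : SimplyConnectedSpace Ω)
    (φ φinv : ℂ → ℂ)
    (hφdiff : DifferentiableOn ℂ φ (ball (0:ℂ) 1))
    (hφderiv : ∀ y ∈ ball (0:ℂ) 1, deriv φ y ≠ 0)
    (hφbij : Set.BijOn φ (ball (0:ℂ) 1) Ω)
    (hφinv : Set.InvOn φinv φ (ball (0:ℂ) 1) Ω)
    (ρ : ℂ → ℝ) (hρcont : ContinuousOn ρ Ω) (hρpos : ∀ x ∈ Ω, 0 < ρ x)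
    (hρint : IntegrableOn ρ Ω)
    (q : ℝ) (hq : 2 < q)
    (f : ℂ → ℝ) (hfm : Measurable f)
    (hfq : IntegrableOn (fun y => |f y| ^ q) (ball (0:ℂ) 1))
    (hKint : IntegrableOn
      (fun x => (ρ x * ‖deriv φ (φinv x)‖ ^ (4/q)) ^ (q/(q-2))) Ω) :
    (∫ x in Ω, |f (φinv x)| ^ 2 * ρ x) ^ ((1:ℝ)/2) ≤
      (∫ y in ball (0:ℂ) 1, |f y| ^ q) ^ (1/q) *
        (∫ x in Ω, (ρ x * ‖deriv φ (φinv x)‖ ^ (4/q)) ^ (q/(q-2))) ^ ((q-2)/(2*q)) :=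
  composition_operator_Lq_to_weighted_L2_general Ω φ φinv hφdiff hφderiv hφbij hφinv ρ hρcont hρpos
    q hq f hfm hfq hKint
end

section
/- Let Ω ⊂ ℂ be a bounded, open, simply connected domain, φ : 𝔻 → Ω a conformal mapping, and 1 ≤ p < 2. Then for every C¹ function f : Ω → ℝ with ∫_Ω |∇f|² dx < ∞, the composition f∘φ satisfies (∫_𝔻 |∇(f∘φ)(y)|^p dy)^{1/p} ≤ π^{(2−p)/p} · (∫_Ω |∇f(x)|² dx)^{1/2}. (This bounds the norm of the composition operator φ* : L^{1,2}(Ω) → L^{1,p}(𝔻) generated by the conformal map φ.) -/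
open MeasureTheory Metric Set
open scoped ENNReal NNReal Real

/-!
A holomorphic map multiplies lengths by `|φ'|` and areas by `|φ'|²`. Hence the chain rule gives
`|∇(f ∘ φ)| = |∇f ∘ φ| |φ'|`, and the change of variables `x = φ y` turns `∫_Ω |∇f|²` into
`∫_𝔻 |∇(f ∘ φ)|²`. Hölder's inequality on the disc, of area `π`, then bounds the `L^p` norm of
`|∇(f ∘ φ)|` by `π^{(2-p)/(2p)}` times its `L²` norm, and `π^{(2-p)/(2p)} ≤ π^{(2-p)/p}`.
-/

theorem ContinuousLinearMap.det_toSpanSingleton_restrictScalars (c : ℂ) :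
    ((toSpanSingleton ℂ c).restrictScalars ℝ).det = ‖c‖ ^ 2 := by
  simp [ContinuousLinearMap.det, LinearMap.det_restrictScalars, Algebra.norm_complex_eq,
    Complex.normSq_eq_norm_sq]

theorem ContinuousLinearMap.toSpanSingleton_restrictScalars_eq_smul_rotation (c : ℂ) :
    (toSpanSingleton ℂ c).restrictScalars ℝ =
      ‖c‖ • ((_root_.rotation (Circle.exp c.arg) : ℂ ≃ₗᵢ[ℝ] ℂ) : ℂ →L[ℝ] ℂ) := by
  ext z
  simp [Circle.coe_exp]
  rw [← mul_assoc, Complex.norm_mul_exp_arg_mul_I, mul_comm]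

theorem ContinuousLinearMap.norm_comp_toSpanSingleton_restrictScalars {F : Type*}
    [NormedAddCommGroup F] [NormedSpace ℝ F] (A : ℂ →L[ℝ] F) (c : ℂ) :
    ‖A.comp ((toSpanSingleton ℂ c).restrictScalars ℝ)‖ = ‖A‖ * ‖c‖ := by
  rw [toSpanSingleton_restrictScalars_eq_smul_rotation c, comp_smul, norm_smul,
    opNorm_comp_linearIsometryEquiv, norm_norm, mul_comm]

theorem norm_fderiv_comp_of_differentiableAt {F : Type*} [NormedAddCommGroup F]
    [NormedSpace ℝ F] {f : ℂ → F} {φ : ℂ → ℂ} {y : ℂ} (hf : DifferentiableAt ℝ f (φ y))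
    (hφ : DifferentiableAt ℂ φ y) :
    ‖fderiv ℝ (f ∘ φ) y‖ = ‖fderiv ℝ f (φ y)‖ * ‖deriv φ y‖ := by
  rw [(hf.hasFDerivAt.comp y (hφ.hasDerivAt.hasFDerivAt.restrictScalars ℝ)).fderiv,
    ContinuousLinearMap.norm_comp_toSpanSingleton_restrictScalars]

section ChangeOfVariables

variable {E : Type*} [NormedAddCommGroup E] [NormedSpace ℝ E] {s : Set ℂ} {φ : ℂ → ℂ}

theorem hasFDerivWithinAt_toSpanSingleton_deriv_of_differentiableOn (hs : IsOpen s)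
    (hφ : DifferentiableOn ℂ φ s) {y : ℂ} (hy : y ∈ s) :
    HasFDerivWithinAt φ ((ContinuousLinearMap.toSpanSingleton ℂ (deriv φ y)).restrictScalars ℝ)
      s y :=
  ((hφ.differentiableAt (hs.mem_nhds hy)).hasDerivAt.hasFDerivAt.restrictScalars ℝ)
    |>.hasFDerivWithinAt

theorem integral_image_eq_integral_norm_deriv_sq_smul_s3 (hs : IsOpen s)
    (hφ : DifferentiableOn ℂ φ s) (hinj : InjOn φ s) (g : ℂ → E) :
    ∫ x in φ '' s, g x = ∫ y in s, ‖deriv φ y‖ ^ 2 • g (φ y) := by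
  simp_rw [integral_image_eq_integral_abs_det_fderiv_smul volume hs.measurableSet
    (fun _ hy => hasFDerivWithinAt_toSpanSingleton_deriv_of_differentiableOn hs hφ hy) hinj g,
    ContinuousLinearMap.det_toSpanSingleton_restrictScalars, abs_sq]

theorem integrableOn_image_iff_integrableOn_norm_deriv_sq_smul_s3 (hs : IsOpen s)
    (hφ : DifferentiableOn ℂ φ s) (hinj : InjOn φ s) (g : ℂ → E) :
    IntegrableOn g (φ '' s) ↔ IntegrableOn (fun y => ‖deriv φ y‖ ^ 2 • g (φ y)) s := by
  simp_rw [integrableOn_image_iff_integrableOn_abs_det_fderiv_smul volume hs.measurableSet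
    (fun _ hy => hasFDerivWithinAt_toSpanSingleton_deriv_of_differentiableOn hs hφ hy) hinj g,
    ContinuousLinearMap.det_toSpanSingleton_restrictScalars, abs_sq]

end ChangeOfVariables

section Holder

variable {α : Type*} [MeasurableSpace α] {μ : Measure α} [IsFiniteMeasure μ] {g : α → ℝ}
  {p : ℝ}

theorem integral_rpow_le_of_integrable_sq (hg0 : ∀ x, 0 ≤ g x)
    (hgm : AEStronglyMeasurable g μ) (hg2 : Integrable (fun x => g x ^ 2) μ) (hp0 : 0 < p)
    (hp2 : p < 2) :
    ∫ x, g x ^ p ∂μ ≤ (∫ x, g x ^ 2 ∂μ) ^ (p / 2) * μ.real univ ^ ((2 - p) / 2) := by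
  have hgp : MemLp (fun x => g x ^ p) (ENNReal.ofReal (2 / p)) μ := by
    have h := ((memLp_two_iff_integrable_sq hgm).mpr hg2).norm_rpow_div (ENNReal.ofReal p)
    rw [ENNReal.toReal_ofReal hp0.le, ← ENNReal.ofReal_ofNat,
      ← ENNReal.ofReal_div_of_pos hp0] at h
    simpa only [Real.norm_of_nonneg (hg0 _)] using h
  have hpq : Real.HolderConjugate (2 / p) (2 / (2 - p)) := by
    refine ⟨?_, by positivity, div_pos two_pos (by linarith)⟩
    rw [inv_div, inv_div, inv_one]; ring
  have hsq : ∀ x, (g x ^ p) ^ (2 / p) = g x ^ 2 := fun x => by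
    rw [← Real.rpow_mul (hg0 x), mul_div_cancel₀ _ hp0.ne', Real.rpow_two]
  calc ∫ x, g x ^ p ∂μ = ∫ x, g x ^ p * 1 ∂μ := by simp
    _ ≤ (∫ x, (g x ^ p) ^ (2 / p) ∂μ) ^ (1 / (2 / p)) *
        (∫ _, (1 : ℝ) ^ (2 / (2 - p)) ∂μ) ^ (1 / (2 / (2 - p))) :=
      integral_mul_le_Lp_mul_Lq_of_nonneg hpq (.of_forall fun x => Real.rpow_nonneg (hg0 x) p)
        (.of_forall fun _ => zero_le_one) hgp (memLp_const 1)
    _ = (∫ x, g x ^ 2 ∂μ) ^ (p / 2) * μ.real univ ^ ((2 - p) / 2) := by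
      simp only [hsq, Real.one_rpow, integral_const, smul_eq_mul, mul_one, one_div_div]

theorem integral_rpow_rpow_inv_le_of_integrable_sq (hg0 : ∀ x, 0 ≤ g x)
    (hgm : AEStronglyMeasurable g μ) (hg2 : Integrable (fun x => g x ^ 2) μ) (hp0 : 0 < p)
    (hp2 : p < 2) :
    (∫ x, g x ^ p ∂μ) ^ (1 / p) ≤
      μ.real univ ^ ((2 - p) / (2 * p)) * (∫ x, g x ^ 2 ∂μ) ^ ((1 : ℝ) / 2) := by
  have hI0 : 0 ≤ ∫ x, g x ^ 2 ∂μ := integral_nonneg fun x => sq_nonneg (g x)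
  calc (∫ x, g x ^ p ∂μ) ^ (1 / p)
      ≤ ((∫ x, g x ^ 2 ∂μ) ^ (p / 2) * μ.real univ ^ ((2 - p) / 2)) ^ (1 / p) :=
        Real.rpow_le_rpow (integral_nonneg fun x => Real.rpow_nonneg (hg0 x) p)
          (integral_rpow_le_of_integrable_sq hg0 hgm hg2 hp0 hp2) (by positivity)
    _ = μ.real univ ^ ((2 - p) / (2 * p)) * (∫ x, g x ^ 2 ∂μ) ^ ((1 : ℝ) / 2) := by
      rw [Real.mul_rpow (by positivity) (by positivity), ← Real.rpow_mul hI0,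
        ← Real.rpow_mul measureReal_nonneg, mul_comm]
      congr 2 <;> field_simp

end Holder

theorem composition_operator_gradient_bound_general
    (Ω : Set ℂ) (hΩopen : IsOpen Ω)
    (φ : ℂ → ℂ)
    (hφdiff : DifferentiableOn ℂ φ (ball (0:ℂ) 1))
    (hφbij : Set.BijOn φ (ball (0:ℂ) 1) Ω)
    (p : ℝ) (hp1 : 1 ≤ p) (hp2 : p < 2)
    (f : ℂ → ℝ) (hf : ContDiffOn ℝ 1 f Ω)
    (hfint : IntegrableOn (fun x => ‖fderiv ℝ f x‖ ^ 2) Ω) :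
    (∫ y in ball (0:ℂ) 1, ‖fderiv ℝ (f ∘ φ) y‖ ^ p) ^ (1/p) ≤
      Real.pi ^ ((2 - p)/p) * (∫ x in Ω, ‖fderiv ℝ f x‖ ^ 2) ^ ((1:ℝ)/2) := by
  set G : ℂ → ℝ := fun y => ‖fderiv ℝ f (φ y)‖ * ‖deriv φ y‖
  have hchain : ∀ y ∈ ball (0:ℂ) 1, ‖fderiv ℝ (f ∘ φ) y‖ = G y := fun y hy =>
    norm_fderiv_comp_of_differentiableAt
      ((hf.contDiffAt (hΩopen.mem_nhds (hφbij.mapsTo hy))).differentiableAt one_ne_zero)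
      (hφdiff.differentiableAt (isOpen_ball.mem_nhds hy))
  have hG_sq : (fun y => ‖deriv φ y‖ ^ 2 • ‖fderiv ℝ f (φ y)‖ ^ 2) = fun y => G y ^ 2 := by
    ext y; simp only [G, smul_eq_mul, mul_pow, mul_comm]
  have hCoV : ∫ x in Ω, ‖fderiv ℝ f x‖ ^ 2 = ∫ y in ball (0:ℂ) 1, G y ^ 2 := by
    rw [← hφbij.image_eq, integral_image_eq_integral_norm_deriv_sq_smul_s3 isOpen_ball hφdiff
      hφbij.injOn, hG_sq]
  have hG_int : IntegrableOn (fun y => G y ^ 2) (ball (0:ℂ) 1) := by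
    rw [← hG_sq, ← integrableOn_image_iff_integrableOn_norm_deriv_sq_smul_s3 isOpen_ball hφdiff
      hφbij.injOn (fun x => ‖fderiv ℝ f x‖ ^ 2), hφbij.image_eq]
    exact hfint
  have hG_meas : AEStronglyMeasurable G (volume.restrict (ball (0:ℂ) 1)) :=
    (((measurable_fderiv ℝ f).norm.comp_aemeasurable
      (hφdiff.continuousOn.aemeasurable measurableSet_ball)).mul
      (measurable_deriv φ).norm.aemeasurable).aestronglyMeasurable
  have : IsFiniteMeasure (volume.restrict (ball (0:ℂ) 1)) :=
    isFiniteMeasure_restrict.mpr measure_ball_lt_top.ne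
  have hvol : volume.real (ball (0:ℂ) 1) = π := by simp [measureReal_def, Complex.volume_ball]
  rw [setIntegral_congr_fun measurableSet_ball fun y hy => by rw [hchain y hy], hCoV]
  calc (∫ y in ball (0:ℂ) 1, G y ^ p) ^ (1 / p)
      ≤ π ^ ((2 - p) / (2 * p)) * (∫ y in ball (0:ℂ) 1, G y ^ 2) ^ ((1:ℝ) / 2) := by
        simpa only [measureReal_restrict_apply_univ, hvol] using
          integral_rpow_rpow_inv_le_of_integrable_sq (fun y => by positivity) hG_meas hG_int
            (by linarith) hp2
    _ ≤ π ^ ((2 - p) / p) * (∫ y in ball (0:ℂ) 1, G y ^ 2) ^ ((1:ℝ) / 2) := by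
        gcongr
        · linarith [Real.pi_gt_three]
        · linarith

/-- The composition operator `φ* : L^{1,2}(Ω) → L^{1,p}(𝔻)` generated by
a conformal map `φ : 𝔻 → Ω` is bounded with norm at most `π^{(2−p)/p}`, for `1 ≤ p < 2`. -/
theorem composition_operator_gradient_bound
    (Ω : Set ℂ) (hΩopen : IsOpen Ω) (hΩbdd : Bornology.IsBounded Ω)
    (hΩsc : SimplyConnectedSpace Ω)
    (φ : ℂ → ℂ)
    (hφdiff : DifferentiableOn ℂ φ (ball (0:ℂ) 1))
    (hφderiv : ∀ y ∈ ball (0:ℂ) 1, deriv φ y ≠ 0)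
    (hφbij : Set.BijOn φ (ball (0:ℂ) 1) Ω)
    (p : ℝ) (hp1 : 1 ≤ p) (hp2 : p < 2)
    (f : ℂ → ℝ) (hf : ContDiffOn ℝ 1 f Ω)
    (hfint : IntegrableOn (fun x => ‖fderiv ℝ f x‖ ^ 2) Ω) :
    (∫ y in ball (0:ℂ) 1, ‖fderiv ℝ (f ∘ φ) y‖ ^ p) ^ (1/p) ≤
      Real.pi ^ ((2 - p)/p) * (∫ x in Ω, ‖fderiv ℝ f x‖ ^ 2) ^ ((1:ℝ)/2) :=
  composition_operator_gradient_bound_general Ω hΩopen φ hφdiff hφbij p hp1 hp2 f hf hfint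
end
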